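/- For s ∈ ℚ(√2) ∩ [0, √2] let d*(s) denote the least positive integer d such that d·s ∈ ℤ[√2]. Then for every s ∈ ℚ(√2) ∩ [0, √2], f(s) ∈ ℚ(√2) and d*(f(s)) = d*(s); that is, the minimal denominator d* is a constant of the motion for f. -/

import Mathlib

noncomputable section

/-- `β = √2 - 1`. -/
def β : ℝ := Real.sqrt 2 - 1

/-- `ω = √2 + 1`. -/
def ω : ℝ := Real.sqrt 2 + 1

/-- The break points `Δ_i`. -/
def Δ (i : ℤ) : ℝ :=
  if i < 0 then β ^ i.natAbs
  else if i = 0 then β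
  else Real.sqrt 2 - β ^ i.natAbs

/-- The intervals `I_i`. -/
def Iint (i : ℤ) : Set ℝ :=
  if i < 0 then Set.Ioc (Δ (i - 1)) (Δ i)
  else if i = 0 then Set.Ioo β 1
  else Set.Ico (Δ i) (Δ (i + 1))

/-- The defining formula of `f` on the interval `I_i`. -/
def fval (i : ℤ) (s : ℝ) : ℝ :=
  if i < 0 then ω ^ (i.natAbs + 1) * (Δ i - s)
  else if i = 0 then ω * (s - β)
  else ω ^ (i.natAbs + 1) * (s - Δ i)

/-- `f` is the renormalization map: `f 0 = f √2 = 0` and on each interval `I_i`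
    it is given by the corresponding affine formula. These conditions determine
    `f` uniquely on `[0, √2]`. -/
def IsLuroth (f : ℝ → ℝ) : Prop :=
  f 0 = 0 ∧ f (Real.sqrt 2) = 0 ∧ ∀ i : ℤ, ∀ s ∈ Iint i, f s = fval i s

/-- `ℚ(√2)` as a subset of `ℝ`. -/
def QSqrt2 : Set ℝ := {x | ∃ a b : ℚ, x = (a : ℝ) + (b : ℝ) * Real.sqrt 2}

/-- `ℤ[√2]` as a subset of `ℝ`. -/
def ZSqrt2 : Set ℝ := {x | ∃ m n : ℤ, x = (m : ℝ) + (n : ℝ) * Real.sqrt 2}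

/-- `M_d = {s ∈ [0,√2] : d·s ∈ ℤ[√2]}`. -/
def Mset (d : ℤ) : Set ℝ :=
  {s | s ∈ Set.Icc 0 (Real.sqrt 2) ∧ (d : ℝ) * s ∈ ZSqrt2}

/-!
On each interval `I_i` the map `f` is `s ↦ u (s - Δ_i)` with `u = ±ω^(|i|+1)` a unit of `ℤ[√2]`
and `Δ_i ∈ ℤ[√2]`; at the endpoints `0` and `√2` it is `s ↦ 1 · (s - s)`, of the same shape. For any
`d ∈ ℤ[√2]` we have `d · u (s - c) = u (d s - d c)`, which lies in `ℤ[√2]` iff `d s` does. So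
`s` and `f s` admit exactly the same denominators.
-/

section SubringClass

variable {A S : Type*} [CommRing A] [SetLike S A] [SubringClass S A] {R : S}

theorem unit_mul_mem_iff (u : Rˣ) {x : A} : (u : A) * x ∈ R ↔ x ∈ R := by
  refine ⟨fun h => ?_, mul_mem (u : R).2⟩
  have hu : ((↑u⁻¹ : R) : A) * (u : R) = 1 := congrArg Subtype.val u.inv_mul
  rw [← one_mul x, ← hu, mul_assoc]
  exact mul_mem (↑u⁻¹ : R).2 h

theorem mul_unit_mul_sub_mem_iff (u : Rˣ) {c d : A} (hc : c ∈ R) (hd : d ∈ R) (s : A) :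
    d * (u * (s - c)) ∈ R ↔ d * s ∈ R := by
  rw [show d * (u * (s - c)) = u * (d * s + -(d * c)) by ring, unit_mul_mem_iff,
    add_mem_cancel_right (neg_mem (mul_mem hd hc))]

end SubringClass

lemma sqrt_two_mul_self : √2 * √2 = 2 := Real.mul_self_sqrt zero_le_two

lemma β_pos : 0 < β := sub_pos.2 Real.one_lt_sqrt_two

lemma β_lt_one : β < 1 := by
  have : √2 < 2 := Real.sqrt_two_lt_three_halves.trans (by norm_num)
  unfold β; linarith

lemma ω_mul_β : ω * β = 1 := by
  unfold ω β; linear_combination sqrt_two_mul_self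

/-- The subring `R + R√2` of `ℝ`, as the image of `R[X]/(X² - 2)`. -/
def adjoinSqrtTwo (R : Type*) [CommRing R] [Algebra R ℝ] : Subalgebra R ℝ :=
  (QuadraticAlgebra.lift ⟨√2, by simp [Algebra.smul_def, map_ofNat]⟩ :
    QuadraticAlgebra R 2 0 →ₐ[R] ℝ).range

lemma mem_adjoinSqrtTwo {R : Type*} [CommRing R] [Algebra R ℝ] {x : ℝ} :
    x ∈ adjoinSqrtTwo R ↔ ∃ a b : R, x = algebraMap R ℝ a + algebraMap R ℝ b * √2 := by
  simp only [adjoinSqrtTwo, AlgHom.mem_range, QuadraticAlgebra.lift_apply_apply, Algebra.smul_def,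
    mul_one, eq_comm]
  exact ⟨fun ⟨z, h⟩ => ⟨z.re, z.im, h⟩, fun ⟨a, b, h⟩ => ⟨⟨a, b⟩, h⟩⟩

lemma coe_adjoinSqrtTwo_int : (adjoinSqrtTwo ℤ : Set ℝ) = ZSqrt2 := by
  ext x; simp [mem_adjoinSqrtTwo, ZSqrt2]

lemma coe_adjoinSqrtTwo_rat : (adjoinSqrtTwo ℚ : Set ℝ) = QSqrt2 := by
  ext x; simp [mem_adjoinSqrtTwo, QSqrt2]

lemma adjoinSqrtTwo_int_subset_rat : (adjoinSqrtTwo ℤ : Set ℝ) ⊆ adjoinSqrtTwo ℚ := by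
  intro x hx
  obtain ⟨m, n, rfl⟩ := mem_adjoinSqrtTwo.1 hx
  exact mem_adjoinSqrtTwo.2 ⟨m, n, by simp⟩

lemma sqrt_two_mem_adjoinSqrtTwo : √2 ∈ adjoinSqrtTwo ℤ :=
  mem_adjoinSqrtTwo.2 ⟨0, 1, by simp⟩

lemma ω_mem_adjoinSqrtTwo : ω ∈ adjoinSqrtTwo ℤ :=
  mem_adjoinSqrtTwo.2 ⟨1, 1, by simp [ω, add_comm]⟩

lemma β_mem_adjoinSqrtTwo : β ∈ adjoinSqrtTwo ℤ :=
  mem_adjoinSqrtTwo.2 ⟨-1, 1, by simp [β, neg_add_eq_sub]⟩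

def ωUnit : (adjoinSqrtTwo ℤ)ˣ where
  val := ⟨ω, ω_mem_adjoinSqrtTwo⟩
  inv := ⟨β, β_mem_adjoinSqrtTwo⟩
  val_inv := Subtype.ext ω_mul_β
  inv_val := Subtype.ext <| (mul_comm β ω).trans ω_mul_β

lemma Δ_mem_adjoinSqrtTwo (i : ℤ) : Δ i ∈ adjoinSqrtTwo ℤ := by
  unfold Δ
  split_ifs
  · exact pow_mem β_mem_adjoinSqrtTwo _
  · exact β_mem_adjoinSqrtTwo
  · exact sub_mem sqrt_two_mem_adjoinSqrtTwo (pow_mem β_mem_adjoinSqrtTwo _)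

lemma fval_eq_unit_mul_sub (i : ℤ) (s : ℝ) :
    ∃ u : (adjoinSqrtTwo ℤ)ˣ, fval i s = u * (s - Δ i) := by
  unfold fval
  split_ifs with _ hzero
  · refine ⟨-ωUnit ^ (i.natAbs + 1), ?_⟩
    simp only [ωUnit, Units.val_neg, Units.val_pow_eq_pow_val, SubmonoidClass.mk_pow,
      NegMemClass.coe_neg]
    ring
  · exact ⟨ωUnit, by simp [ωUnit, Δ, hzero]⟩
  · exact ⟨ωUnit ^ (i.natAbs + 1), by simp [ωUnit]⟩

lemma Iint_neg_natCast {k : ℕ} (hk : 0 < k) : Iint (-k) = Set.Ioc (β ^ (k + 1)) (β ^ k) := by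
  have hk' : (-(k : ℤ) - 1).natAbs = k + 1 := by omega
  simp [Iint, Δ, hk, hk', show -(k : ℤ) - 1 < 0 by omega]

lemma Iint_natCast {k : ℕ} (hk : 0 < k) :
    Iint k = Set.Ico (√2 - β ^ k) (√2 - β ^ (k + 1)) := by
  have hk' : ((k : ℤ) + 1).natAbs = k + 1 := by omega
  simp [Iint, Δ, hk.ne', hk', show ¬((k : ℤ) < 0) by omega, show ¬((k : ℤ) + 1 < 0) by omega,
    show (k : ℤ) + 1 ≠ 0 by omega]

lemma exists_β_pow_near {t : ℝ} (ht : 0 < t) (htβ : t ≤ β) :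
    ∃ k : ℕ, 0 < k ∧ β ^ (k + 1) < t ∧ t ≤ β ^ k := by
  obtain ⟨k, hlt, hle⟩ := exists_nat_pow_near_of_lt_one ht (htβ.trans β_lt_one.le) β_pos β_lt_one
  refine ⟨k, Nat.pos_of_ne_zero fun hk => ?_, hlt, hle⟩
  subst hk
  exact (pow_one β ▸ hlt).not_ge htβ

lemma exists_mem_Iint {s : ℝ} (hs₀ : 0 < s) (hs₂ : s < √2) : ∃ i, s ∈ Iint i := by
  rcases le_or_gt s β with hsβ | hβs
  · obtain ⟨k, hk, hlt, hle⟩ := exists_β_pow_near hs₀ hsβ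
    exact ⟨-k, by rw [Iint_neg_natCast hk]; exact ⟨hlt, hle⟩⟩
  rcases lt_or_ge s 1 with hs₁ | h1s
  · exact ⟨0, by simpa [Iint] using ⟨hβs, hs₁⟩⟩
  -- the right half is the mirror image of the left one under `s ↦ √2 - s`
  obtain ⟨k, hk, hlt, hle⟩ := exists_β_pow_near (sub_pos.2 hs₂) (by unfold β; linarith)
  exact ⟨k, by rw [Iint_natCast hk]; constructor <;> linarith⟩

lemma IsLuroth.exists_unit_mul_sub {f : ℝ → ℝ} (hf : IsLuroth f) {s : ℝ}
    (hs : s ∈ Set.Icc 0 √2) :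
    ∃ (u : (adjoinSqrtTwo ℤ)ˣ) (c : ℝ), c ∈ adjoinSqrtTwo ℤ ∧ f s = u * (s - c) := by
  obtain ⟨hf₀, hf₂, hfI⟩ := hf
  rcases hs.1.eq_or_lt with rfl | hs₀
  · exact ⟨1, 0, zero_mem _, by simp [hf₀]⟩
  rcases hs.2.eq_or_lt with rfl | hs₂
  · exact ⟨1, √2, sqrt_two_mem_adjoinSqrtTwo, by simp [hf₂]⟩
  obtain ⟨i, hi⟩ := exists_mem_Iint hs₀ hs₂
  obtain ⟨u, hu⟩ := fval_eq_unit_mul_sub i s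
  exact ⟨u, Δ i, Δ_mem_adjoinSqrtTwo i, (hfI i s hi).trans hu⟩

/-- the minimal denominator `d*` is a constant of the motion:
for `s ∈ ℚ(√2) ∩ [0,√2]`, `f s ∈ ℚ(√2)`, and a positive integer `n` is the
least positive integer `d` with `d·s ∈ ℤ[√2]` iff it is the least positive
integer `d` with `d·(f s) ∈ ℤ[√2]`. -/
theorem luroth_min_denominator_invariant (f : ℝ → ℝ) (hf : IsLuroth f) :
    ∀ s ∈ QSqrt2 ∩ Set.Icc (0 : ℝ) (Real.sqrt 2),
      f s ∈ QSqrt2 ∧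
      ∀ n : ℕ,
        (IsLeast {d : ℕ | 0 < d ∧ ((d : ℝ) * s) ∈ ZSqrt2} n ↔
          IsLeast {d : ℕ | 0 < d ∧ ((d : ℝ) * f s) ∈ ZSqrt2} n) := by
  rintro s ⟨hsQ, hs⟩
  obtain ⟨u, c, hc, hfs⟩ := hf.exists_unit_mul_sub hs
  rw [← coe_adjoinSqrtTwo_rat] at hsQ ⊢
  refine ⟨?_, fun _ => ?_⟩
  · rw [hfs]
    exact mul_mem (adjoinSqrtTwo_int_subset_rat (u : adjoinSqrtTwo ℤ).2)
      (sub_mem hsQ (adjoinSqrtTwo_int_subset_rat hc))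
  · simp only [← coe_adjoinSqrtTwo_int, SetLike.mem_coe, hfs,
      mul_unit_mul_sub_mem_iff u hc (natCast_mem _ _)]
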